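/- arXiv:1401.1293 — 2 statements merged into one kernel-verified Lean document; each statement's English description precedes it below -/
import Mathlib

section
/- The maps φ₁ and φ₂ are bijective, and the identity (id_{M^{r−1}} × (i − j)) ∘ φ₁ = φ₂ ∘ (ĩ − j̃) holds as maps from M^r to M^{r−1} × M′. -/
/-!
`φ₁` is inverted by solving `x₁ = y_r`, `x_{t+1} = j₀ x_t − y_t` recursively, and `φ₂` is a shear.
For the identity, only the last coordinate is not immediate: it amounts to
`j(x₁) = Σ_s j_s(x_s) + Σ_{s+t≤r} j_{s+t}(j₀^{s−1}(j₀ x_t − x_{t+1}))`, which follows by writing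
`j₀^{k−1} x₁ − x_k` as the telescoping sum `Σ_{t<k} j₀^{k−1−t}(j₀ x_t − x_{t+1})` and exchanging
the order of summation.
-/

section

variable {S M M' : Type*} [CommRing S] [AddCommGroup M] [Module S M]
  [AddCommGroup M'] [Module S M']

/-- `ĩ(x₁,…,x_r) = (−x₂,…,−x_r, i(x₁))` with `r = m + 1`. -/
noncomputable def itilde (m : ℕ) (i : M →ₗ[S] M') :
    (Fin (m + 1) → M) →ₗ[S] (Fin m → M) × M' :=
  LinearMap.prod
    (LinearMap.pi fun s : Fin m => -LinearMap.proj s.succ)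
    (i ∘ₗ LinearMap.proj 0)

/-- `j̃(x₁,…,x_r) = (−j₀(x₁),…,−j₀(x_{r−1}), Σ_{s=1}^r j_s(x_s))` with `r = m + 1`,
where `j s` (for `s : Fin (m+1)`) denotes `j_{s+1}`. -/
noncomputable def jtilde (m : ℕ) (j₀ : M →ₗ[S] M) (j : Fin (m + 1) → M →ₗ[S] M') :
    (Fin (m + 1) → M) →ₗ[S] (Fin m → M) × M' :=
  LinearMap.prod
    (LinearMap.pi fun s : Fin m => -(j₀ ∘ₗ LinearMap.proj s.castSucc))
    (∑ s : Fin (m + 1), (j s) ∘ₗ LinearMap.proj s)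

/-- `j = Σ_{s=1}^r j_s ∘ j₀^{s−1}` with `r = m + 1`. -/
noncomputable def jsum (m : ℕ) (j₀ : M →ₗ[S] M) (j : Fin (m + 1) → M →ₗ[S] M') :
    M →ₗ[S] M' :=
  ∑ s : Fin (m + 1), (j s) ∘ₗ (j₀ ^ (s : ℕ))

/-- `(x₁,…,x_{r−1}) ↦ Σ_{s+t≤r, s,t≥1} j_{s+t}(j₀^{s−1}(x_t))` with `r = m + 1`. -/
noncomputable def corr (m : ℕ) (j₀ : M →ₗ[S] M) (j : Fin (m + 1) → M →ₗ[S] M') :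
    (Fin m → M) →ₗ[S] M' :=
  ∑ t : Fin m, ∑ s : Fin (m - (t : ℕ)),
    (j ⟨(s : ℕ) + (t : ℕ) + 1, by have hs := s.isLt; have ht := t.isLt; omega⟩) ∘ₗ
      ((j₀ ^ (s : ℕ)) ∘ₗ LinearMap.proj t)

/-- `φ₁(x₁,…,x_r) = (j₀(x₁)−x₂, …, j₀(x_{r−1})−x_r, x₁)` with `r = m + 1`. -/
noncomputable def phi1 (m : ℕ) (j₀ : M →ₗ[S] M) :
    (Fin (m + 1) → M) →ₗ[S] (Fin (m + 1) → M) :=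
  LinearMap.pi fun s : Fin (m + 1) =>
    Fin.lastCases (motive := fun _ => (Fin (m + 1) → M) →ₗ[S] M) (LinearMap.proj 0)
      (fun t : Fin m => (j₀ ∘ₗ LinearMap.proj t.castSucc) - (LinearMap.proj t.succ : (Fin (m + 1) → M) →ₗ[S] M)) s

/-- `φ₂(x₁,…,x_{r−1},x′) = (x₁,…,x_{r−1}, x′ − Σ_{s+t≤r, s,t≥1} j_{s+t}(j₀^{s−1}(x_t)))`. -/
noncomputable def phi2 (m : ℕ) (j₀ : M →ₗ[S] M) (j : Fin (m + 1) → M →ₗ[S] M') :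
    (Fin m → M) × M' →ₗ[S] (Fin m → M) × M' :=
  LinearMap.prod
    (LinearMap.fst S (Fin m → M) M')
    (LinearMap.snd S (Fin m → M) M' - (corr m j₀ j) ∘ₗ LinearMap.fst S (Fin m → M) M')

/-- `id_{M^{r−1}} × g : M^r → M^{r−1} × M′`, `(x₁,…,x_r) ↦ (x₁,…,x_{r−1}, g(x_r))`. -/
noncomputable def idOplus (m : ℕ) (g : M →ₗ[S] M') :
    (Fin (m + 1) → M) →ₗ[S] (Fin m → M) × M' :=
  LinearMap.prod
    (LinearMap.pi fun t : Fin m => LinearMap.proj t.castSucc)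
    (g ∘ₗ LinearMap.proj (Fin.last m))

open Finset

section

variable {R A B : Type*} [Semiring R] [AddCommGroup A] [Module R A] [AddCommGroup B] [Module R B]

theorem Module.End.pow_succ_apply_sub_eq_sum (f : Module.End R A) (x : ℕ → A) (n : ℕ) :
    (f ^ (n + 1)) (x 0) - x (n + 1) =
      ∑ t ∈ range (n + 1), (f ^ (n - t)) (f (x t) - x (t + 1)) := by
  induction n with
  | zero => simp
  | succ n ih =>
    have hstep : (f ^ (n + 2)) (x 0) - x (n + 2) =
        f ((f ^ (n + 1)) (x 0) - x (n + 1)) + (f (x (n + 1)) - x (n + 2)) := by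
      rw [pow_succ', Module.End.mul_apply, map_sub]
      abel
    rw [hstep, ih, map_sum, sum_range_succ _ (n + 1), Nat.sub_self, pow_zero,
      Module.End.one_apply]
    congr 1
    refine sum_congr rfl fun t ht => ?_
    rw [← Module.End.mul_apply, ← pow_succ', Nat.sub_add_comm (mem_range_succ_iff.mp ht)]

theorem sum_range_apply_pow_apply_zero (J : ℕ → A →ₗ[R] B) (f : Module.End R A) (x : ℕ → A)
    (m : ℕ) :
    ∑ k ∈ range (m + 1), J k ((f ^ k) (x 0)) =
      ∑ k ∈ range (m + 1), J k (x k) +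
        ∑ t ∈ range m, ∑ s ∈ range (m - t), J (s + t + 1) ((f ^ s) (f (x t) - x (t + 1))) := by
  rw [← sub_eq_iff_eq_add', ← sum_sub_distrib]
  simp_rw [← map_sub]
  rw [sum_range_succ']
  simp only [pow_zero, Module.End.one_apply, sub_self, map_zero, add_zero,
    Module.End.pow_succ_apply_sub_eq_sum, map_sum]
  rw [← sum_range_diag_flip]
  refine sum_congr rfl fun i _ => sum_congr rfl fun t ht => ?_
  rw [Nat.sub_add_cancel (mem_range_succ_iff.mp ht)]

end

section

variable (m : ℕ) (j₀ : M →ₗ[S] M)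

theorem phi1_apply_castSucc (x : Fin (m + 1) → M) (t : Fin m) :
    phi1 m j₀ x t.castSucc = j₀ (x t.castSucc) - x t.succ := by
  simp [phi1]

theorem phi1_apply_last (x : Fin (m + 1) → M) : phi1 m j₀ x (Fin.last m) = x 0 := by
  simp [phi1]

def phi1Inv (y : Fin (m + 1) → M) : Fin (m + 1) → M :=
  Fin.induction (y (Fin.last m)) fun t x => j₀ x - y t.castSucc

theorem phi1Inv_zero (y : Fin (m + 1) → M) : phi1Inv m j₀ y 0 = y (Fin.last m) :=
  Fin.induction_zero ..

theorem phi1Inv_succ (y : Fin (m + 1) → M) (t : Fin m) :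
    phi1Inv m j₀ y t.succ = j₀ (phi1Inv m j₀ y t.castSucc) - y t.castSucc :=
  Fin.induction_succ ..

theorem phi1Inv_phi1 (x : Fin (m + 1) → M) : phi1Inv m j₀ (phi1 m j₀ x) = x := by
  funext k
  induction k using Fin.induction with
  | zero => rw [phi1Inv_zero, phi1_apply_last]
  | succ t ih => rw [phi1Inv_succ, ih, phi1_apply_castSucc, sub_sub_cancel]

theorem phi1_phi1Inv (y : Fin (m + 1) → M) : phi1 m j₀ (phi1Inv m j₀ y) = y := by
  funext k
  induction k using Fin.lastCases with
  | last => rw [phi1_apply_last, phi1Inv_zero]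
  | cast t => rw [phi1_apply_castSucc, phi1Inv_succ, sub_sub_cancel]

theorem phi1_bijective : Function.Bijective (phi1 m j₀) :=
  Function.bijective_iff_has_inverse.mpr ⟨phi1Inv m j₀, phi1Inv_phi1 m j₀, phi1_phi1Inv m j₀⟩

variable (j : Fin (m + 1) → M →ₗ[S] M')

theorem phi2_bijective : Function.Bijective (phi2 m j₀ j) := by
  have h : ⇑(phi2 m j₀ j) =
      (LinearEquiv.refl S (Fin m → M)).skewProd (LinearEquiv.refl S M') (-corr m j₀ j) := by
    funext p
    simp [phi2, sub_eq_add_neg]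
  rw [h]
  exact LinearEquiv.bijective _

theorem jsum_apply_zero (x : Fin (m + 1) → M) :
    jsum m j₀ j (x 0) =
      ∑ s, j s (x s) + corr m j₀ j fun t => j₀ (x t.castSucc) - x t.succ := by
  -- extend `j` and `x` by zero to `ℕ`, so that the sums over `Fin` become sums over ranges
  let J : ℕ → M →ₗ[S] M' := Function.extend Fin.val j 0
  let X : ℕ → M := Function.extend Fin.val x 0
  have hJ (k : Fin (m + 1)) : J k = j k := Fin.val_injective.extend_apply j 0 k
  have hX (k : Fin (m + 1)) : X k = x k := Fin.val_injective.extend_apply x 0 k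
  have h := sum_range_apply_pow_apply_zero J j₀ X m
  simp only [Finset.sum_range] at h
  simp only [jsum, corr, LinearMap.sum_apply, LinearMap.comp_apply, LinearMap.proj_apply,
    ← hJ, ← hX, Fin.val_zero, Fin.val_castSucc, Fin.val_succ]
  exact h

theorem phi2_apply (p : (Fin m → M) × M') : phi2 m j₀ j p = (p.1, p.2 - corr m j₀ j p.1) :=
  rfl

theorem idOplus_apply (g : M →ₗ[S] M') (x : Fin (m + 1) → M) :
    idOplus m g x = (fun t => x t.castSucc, g (x (Fin.last m))) :=
  rfl

theorem itilde_sub_jtilde_apply (i : M →ₗ[S] M') (x : Fin (m + 1) → M) :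
    (itilde m i - jtilde m j₀ j) x =
      (fun t => j₀ (x t.castSucc) - x t.succ, i (x 0) - ∑ s, j s (x s)) := by
  refine Prod.ext (funext fun t => ?_) ?_
  · simp [itilde, jtilde, neg_add_eq_sub]
  · simp [itilde, jtilde]

theorem idOplus_comp_phi1 (i : M →ₗ[S] M') :
    idOplus m (i - jsum m j₀ j) ∘ₗ phi1 m j₀ = phi2 m j₀ j ∘ₗ (itilde m i - jtilde m j₀ j) := by
  refine LinearMap.ext fun x => ?_
  rw [LinearMap.comp_apply, LinearMap.comp_apply, itilde_sub_jtilde_apply, phi2_apply,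
    idOplus_apply, phi1_apply_last, LinearMap.sub_apply, jsum_apply_zero]
  refine Prod.ext (funext fun t => phi1_apply_castSucc m j₀ x t) ?_
  dsimp only
  abel

end

/-- `φ₁` and `φ₂` are bijective and
`(id_{M^{r−1}} × (i − j)) ∘ φ₁ = φ₂ ∘ (ĩ − j̃)` (here `r = m + 1 ≥ 1` and
`j = Σ_{s=1}^r j_s ∘ j₀^{s−1}`). -/
theorem stmt_4 (m : ℕ) (i : M →ₗ[S] M') (j₀ : M →ₗ[S] M)
    (j : Fin (m + 1) → M →ₗ[S] M') :
    Function.Bijective (phi1 m j₀) ∧ Function.Bijective (phi2 m j₀ j) ∧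
      (idOplus m (i - jsum m j₀ j)) ∘ₗ phi1 m j₀
        = (phi2 m j₀ j) ∘ₗ (itilde m i - jtilde m j₀ j) :=
  ⟨phi1_bijective m j₀, phi2_bijective m j₀ j, idOplus_comp_phi1 m j₀ j i⟩

end
end

section
/- The map ĩ : M^r → M^{r−1} × M′ is an isomorphism, and det_S(id_{M^r} − ĩ⁻¹ ∘ j̃) = det_S(id_M − i⁻¹ ∘ j), where j = Σ_{s=1}^r j_s ∘ j₀^{s−1}. -/
open LinearMap

section

variable {S M M' : Type*} [CommRing S] [AddCommGroup M] [Module S M] [AddCommGroup M']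
  [Module S M']

theorem LinearMap.det_id_sub_comp_comm [Module.Free S M] [Module.Finite S M]
    [Module.Free S M'] [Module.Finite S M'] (f : M →ₗ[S] M') (g : M' →ₗ[S] M) :
    LinearMap.det (LinearMap.id - g ∘ₗ f) = LinearMap.det (LinearMap.id - f ∘ₗ g) := by
  let bM := Module.Free.chooseBasis S M
  let bM' := Module.Free.chooseBasis S M'
  rw [← det_toMatrix bM, ← det_toMatrix bM', map_sub, map_sub, toMatrix_id, toMatrix_id,
    toMatrix_comp bM bM' bM, toMatrix_comp bM' bM bM', Matrix.det_one_sub_mul_comm]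

theorem LinearMap.id_sub_add_comp_eq_comp {N : Type*} [AddCommGroup N] [Module S N]
    (n : M →ₗ[S] M) (c : N →ₗ[S] M) (b : M →ₗ[S] N) :
    LinearMap.id - (n + ((LinearMap.id - n) ∘ₗ c) ∘ₗ b) =
      (LinearMap.id - n) ∘ₗ (LinearMap.id - c ∘ₗ b) := by
  rw [comp_sub, comp_id, comp_assoc]
  abel

noncomputable def itildeEquiv (m : ℕ) (i : M ≃ₗ[S] M') :
    (Fin (m + 1) → M) ≃ₗ[S] (Fin m → M) × M' :=
  (Fin.consLinearEquiv S fun _ => M).symm ≪≫ₗ LinearEquiv.prodComm S M (Fin m → M) ≪≫ₗ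
    (LinearEquiv.neg S).prodCongr i

theorem itildeEquiv_toLinearMap (m : ℕ) (i : M ≃ₗ[S] M') :
    (itildeEquiv m i : (Fin (m + 1) → M) →ₗ[S] (Fin m → M) × M') = itilde m i.toLinearMap := by
  ext x <;> simp [itildeEquiv, itilde, Fin.tail]

section shift

variable (m : ℕ) (j₀ : M →ₗ[S] M)

noncomputable def shiftMap : (Fin (m + 1) → M) →ₗ[S] Fin (m + 1) → M :=
  vecCons 0 LinearMap.id ∘ₗ pi fun s : Fin m => j₀ ∘ₗ proj s.castSucc

theorem pi_comp_vecCons_eq_shiftMap :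
    (pi fun s : Fin (m + 1) => j₀ ∘ₗ proj s.castSucc) ∘ₗ (vecCons 0 LinearMap.id : _ →ₗ[S] _) =
      shiftMap m j₀ := by
  ext l x k
  cases k using Fin.cases <;> simp [shiftMap]

/-- Nilpotency of the shift alone would not give determinant `1` over a non-reduced ring; instead,
swapping the two factors of `shiftMap` by Weinstein–Aronszajn removes one coordinate. -/
theorem det_id_sub_shiftMap [Module.Free S M] [Module.Finite S M] :
    LinearMap.det (LinearMap.id - shiftMap m j₀) = 1 := by
  induction m with
  | zero => simp [shiftMap, Subsingleton.elim (pi _) (0 : (Fin 1 → M) →ₗ[S] Fin 0 → M)]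
  | succ m ih => rw [shiftMap, det_id_sub_comp_comm, pi_comp_vecCons_eq_shiftMap, ih]

noncomputable def powersMap : M →ₗ[S] Fin (m + 1) → M :=
  pi fun k => j₀ ^ (k : ℕ)

theorem id_sub_shiftMap_comp_powersMap :
    (LinearMap.id - shiftMap m j₀) ∘ₗ powersMap m j₀ = single S (fun _ => M) 0 := by
  ext x k
  cases k using Fin.cases <;> simp [shiftMap, powersMap, pow_succ']

theorem lsum_comp_powersMap (j : Fin (m + 1) → M →ₗ[S] M') :
    lsum S (fun _ => M) S j ∘ₗ powersMap m j₀ = jsum m j₀ j := by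
  ext x
  simp [powersMap, jsum, lsum_apply]

theorem itildeEquiv_symm_comp_jtilde (i : M ≃ₗ[S] M') (j : Fin (m + 1) → M →ₗ[S] M') :
    (itildeEquiv m i).symm ∘ₗ jtilde m j₀ j =
      shiftMap m j₀ + (single S (fun _ => M) 0 ∘ₗ i.symm) ∘ₗ lsum S (fun _ => M) S j := by
  ext l x k
  cases k using Fin.cases <;> simp [itildeEquiv, jtilde, shiftMap, lsum_apply]

end shift

end

section

variable {S M M' : Type*} [CommRing S] [AddCommGroup M] [Module S M]
  [AddCommGroup M'] [Module S M'] [Module.Free S M] [Module.Finite S M]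
  [Module.Free S M'] [Module.Finite S M']

/-- if `M` and `M′` are finite free and `i : M ≃ M′` is an isomorphism,
then `ĩ : M^r → M^{r−1} × M′` is an isomorphism, and for any two-sided inverse `ĩ⁻¹`
of `ĩ` one has `det_S(id − ĩ⁻¹ ∘ j̃) = det_S(id − i⁻¹ ∘ j)` where
`j = Σ_{s=1}^r j_s ∘ j₀^{s−1}` (here `r = m + 1 ≥ 1`). -/
theorem stmt_5 (m : ℕ) (i : M ≃ₗ[S] M') (j₀ : M →ₗ[S] M)
    (j : Fin (m + 1) → M →ₗ[S] M') :
    Function.Bijective (itilde m i.toLinearMap) ∧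
    ∀ itinv : (Fin m → M) × M' →ₗ[S] (Fin (m + 1) → M),
      itinv ∘ₗ itilde m i.toLinearMap = LinearMap.id →
      itilde m i.toLinearMap ∘ₗ itinv = LinearMap.id →
      LinearMap.det (LinearMap.id - itinv ∘ₗ jtilde m j₀ j)
        = LinearMap.det (LinearMap.id - i.symm.toLinearMap ∘ₗ jsum m j₀ j) := by
  rw [← itildeEquiv_toLinearMap]
  refine ⟨(itildeEquiv m i).bijective, fun itinv hleft _ => ?_⟩
  obtain rfl : itinv = (itildeEquiv m i).symm := by
    rw [← comp_id itinv, ← LinearEquiv.comp_symm (itildeEquiv m i), ← comp_assoc, hleft, id_comp]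
  rw [itildeEquiv_symm_comp_jtilde, ← id_sub_shiftMap_comp_powersMap, comp_assoc,
    id_sub_add_comp_eq_comp, det_comp, det_id_sub_shiftMap, one_mul, det_id_sub_comp_comm,
    comp_assoc, lsum_comp_powersMap]

end
end
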